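/- Let P₀ be the preordering in 𝒯 generated by {Tr(p²) : p ∈ ℝ[x]} (traces of squares of ordinary polynomials in x only). Then the pure trace polynomial T₂ − T₁² cannot be written as a quotient of elements of P₀; that is, there do not exist q₁, q₂ ∈ P₀ with q₂ ≠ 0 and q₂·(T₂ − T₁²) = q₁. (Note that T₂ − T₁² = Tr((x − T₁)²) ∈ Ω, so traces of squares of genuine trace polynomials are essential.) -/

import Mathlib

noncomputable section

/-- The ring 𝒯 of pure trace polynomials: `MvPolynomial.X j` stands for the symbol `Tr(x^j)`
(for `j ≥ 1`; the variable of index `0` is unused). -/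
abbrev TP : Type := MvPolynomial ℕ ℝ

/-- The ring 𝔗 = 𝒯[x] of univariate trace polynomials. -/
abbrev TPoly : Type := Polynomial TP

/-- The symbol `T_j = Tr(x^j)`, with `T₀ = Tr(1) = 1`. -/
def Tj (j : ℕ) : TP := if j = 0 then 1 else MvPolynomial.X j

/-- The 𝒯-linear trace map `Tr : 𝔗 → 𝒯`, determined by `x^j ↦ T_j` and `Tr(1) = 1`. -/
def TrF (f : TPoly) : TP := f.sum fun j c => c * Tj j

/-- The normalized trace moments `j ↦ (1/n)·tr(X^j)` of a matrix. -/
def nTr {n : ℕ} (X : Matrix (Fin n) (Fin n) ℝ) (j : ℕ) : ℝ := (n : ℝ)⁻¹ * (X ^ j).trace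

/-- Evaluation of a pure trace polynomial at a matrix (`T_j ↦ (1/n)·tr(X^j)`). -/
def evalT {n : ℕ} (X : Matrix (Fin n) (Fin n) ℝ) (p : TP) : ℝ := MvPolynomial.eval (nTr X) p

/-- Evaluation of a trace polynomial at a symmetric matrix: substitute `X` for `x` and
`(1/n)·tr(X^j)` for `T_j`. -/
def evalM {n : ℕ} (X : Matrix (Fin n) (Fin n) ℝ) (f : TPoly) : Matrix (Fin n) (Fin n) ℝ :=
  Polynomial.eval₂ ((Matrix.scalar (Fin n)).comp (MvPolynomial.eval (nTr X))) X f

/-- Membership in the preordering generated by `S` inside a commutative ring, where the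
allowed squares are squares of elements of `Sq` (take `Sq = Set.univ` for the preordering in
the whole ring): the smallest set containing `S` and the squares of elements of `Sq` that is
closed under addition and multiplication. -/
inductive InPre {R : Type*} [CommRing R] (Sq : Set R) (S : Set R) : R → Prop
  | of {s : R} : s ∈ S → InPre Sq S s
  | sq {r : R} : r ∈ Sq → InPre Sq S (r ^ 2)
  | add {a b : R} : InPre Sq S a → InPre Sq S b → InPre Sq S (a + b)
  | mul {a b : R} : InPre Sq S a → InPre Sq S b → InPre Sq S (a * b)

/-- The preordering Ω in 𝒯 generated by traces of squares of trace polynomials. -/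
def Omega : TP → Prop := InPre Set.univ {p | ∃ g : TPoly, p = TrF (g ^ 2)}

/-- `σ_j(M)`: the coefficients of the characteristic polynomial,
`det(t·I − M) = t^m − σ₁(M) t^{m−1} + ⋯ + (−1)^m σ_m(M)`. -/
def sigmaCoeff {R : Type*} [CommRing R] {m : ℕ} (j : ℕ) (M : Matrix (Fin m) (Fin m) R) : R :=
  (-1 : R) ^ j * M.charpoly.coeff (m - j)

/-- The Hankel matrix `Han_d` over 𝒯, with `(i,j)` entry `T_{i+j}` (0-indexed), `T₀ = 1`. -/
def HanT (d : ℕ) : Matrix (Fin (d+1)) (Fin (d+1)) TP := fun i j => Tj (i.val + j.val)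

/-- Extension of a point `γ ∈ ℝ^{2d}` (where `γ i` is the value of `T_{i+1}`) to all indices,
with `T₀ ↦ 1`. -/
def extPt (d : ℕ) (γ : Fin (2*d) → ℝ) : ℕ → ℝ :=
  fun j => if h : 0 < j ∧ j ≤ 2*d then γ ⟨j - 1, by omega⟩ else 1

/-- Evaluation `s[γ]` of `s ∈ 𝒯_{2d}` at `γ ∈ ℝ^{2d}`. -/
def evalPt (d : ℕ) (γ : Fin (2*d) → ℝ) (s : TP) : ℝ := MvPolynomial.eval (extPt d γ) s

/-- Evaluation `f[β]` of `f ∈ 𝔗_{2d}` at `β = (b₀, γ) ∈ ℝ^{1+2d}` (`x ↦ b₀`, `T_j ↦ γ_j`). -/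
def evalPt' (d : ℕ) (b₀ : ℝ) (γ : Fin (2*d) → ℝ) (f : TPoly) : ℝ :=
  Polynomial.eval₂ (MvPolynomial.eval (extPt d γ)) b₀ f

/-- The real Hankel matrix `Han_d[γ]`. -/
def hankelPt (d : ℕ) (γ : Fin (2*d) → ℝ) : Matrix (Fin (d+1)) (Fin (d+1)) ℝ :=
  fun i j => extPt d γ (i.val + j.val)

/-- The set `L_S ⊆ ℝ^{2d}`. -/
def LSet (d : ℕ) (S : Finset TP) : Set (Fin (2*d) → ℝ) :=
  {γ | (∀ s ∈ S, 0 ≤ evalPt d γ s) ∧ (hankelPt d γ).PosSemidef}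


/-- The variable `T_j = Tr(x^j)` of `𝒯`. -/
def Tv (j : ℕ) : TP := MvPolynomial.X j

/-- The preordering `P₀` in `𝒯` generated by traces of squares of ordinary polynomials in
`x` only. -/
def P0 : TP → Prop :=
  InPre Set.univ
    {q : TP | ∃ p : Polynomial ℝ, q = TrF ((p.map (MvPolynomial.C : ℝ →+* TP)) ^ 2)}

open Polynomial Filter

/-- The evaluation point: `T_j ↦ t^j + c_j` (and `X 0 ↦ c 0`). -/
def ptv (c : ℕ → ℝ) (t : ℝ) : ℕ → ℝ := fun j => if j = 0 then c 0 else t ^ j + c j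

lemma TrF_add (f g : TPoly) : TrF (f + g) = TrF f + TrF g := by
  unfold TrF
  exact Polynomial.sum_add_index f g _ (fun j => zero_mul _) (fun j a b => add_mul a b _)

lemma evalTrF (v : ℕ → ℝ) (P : Polynomial ℝ) :
    MvPolynomial.eval v (TrF (P.map MvPolynomial.C)) =
      P.sum fun j a => a * (if j = 0 then 1 else v j) := by
  induction P using Polynomial.induction_on' with
  | add p q hp hq =>
    rw [Polynomial.map_add, TrF_add, map_add, hp, hq,
      Polynomial.sum_add_index p q _ (fun j => by simp) (fun j a b => by ring)]
  | monomial n a =>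
    rw [Polynomial.map_monomial]
    unfold TrF
    rw [Polynomial.sum_monomial_index (n := n) _ _ (zero_mul _),
      Polynomial.sum_monomial_index (n := n) _ _ (zero_mul _)]
    simp only [map_mul, MvPolynomial.eval_C, Tj]
    split_ifs with h
    · simp
    · simp [MvPolynomial.eval_X]

lemma eval_ptv_TrF (c : ℕ → ℝ) (t : ℝ) (P : Polynomial ℝ) :
    MvPolynomial.eval (ptv c t) (TrF (P.map MvPolynomial.C)) =
      P.eval t + P.sum fun j a => a * (if j = 0 then 0 else c j) := by
  rw [evalTrF, Polynomial.eval_eq_sum, Polynomial.sum_def, Polynomial.sum_def,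
    Polynomial.sum_def, ← Finset.sum_add_distrib]
  apply Finset.sum_congr rfl
  intro j _
  by_cases h : j = 0
  · subst h; simp [ptv]
  · simp only [h, if_false, ptv]
    ring

lemma key (c : ℕ → ℝ) (q : TP) (hq : P0 q) :
    ∀ᶠ t in atTop, 0 ≤ MvPolynomial.eval (ptv c t) q := by
  induction hq with
  | of h =>
    obtain ⟨p, rfl⟩ := h
    rw [show ((p.map (MvPolynomial.C : ℝ →+* TP)) ^ 2) = (p ^ 2).map MvPolynomial.C by
      rw [Polynomial.map_pow]]
    have hev : ∀ t : ℝ, MvPolynomial.eval (ptv c t) (TrF ((p ^ 2).map MvPolynomial.C)) =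
        (p.eval t) ^ 2 + (p ^ 2).sum fun j a => a * (if j = 0 then 0 else c j) := by
      intro t
      rw [eval_ptv_TrF, Polynomial.eval_pow]
    set K : ℝ := (p ^ 2).sum fun j a => a * (if j = 0 then 0 else c j) with hK
    by_cases hdeg : 0 < p.degree
    · have habs := Polynomial.abs_tendsto_atTop p hdeg
      filter_upwards [habs.eventually_ge_atTop (max 1 |K|)] with t ht
      rw [hev t]
      have h1 : (1 : ℝ) ≤ |p.eval t| := le_trans (le_max_left _ _) ht
      have h2 : |K| ≤ |p.eval t| := le_trans (le_max_right _ _) ht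
      nlinarith [sq_abs (p.eval t), neg_abs_le K, abs_nonneg (p.eval t)]
    · -- p is constant
      have hc : p = Polynomial.C (p.coeff 0) := by
        rcases le_or_gt p.degree 0 with h | h
        · exact Polynomial.eq_C_of_degree_le_zero h
        · exact absurd h hdeg
      have hK0 : K = 0 := by
        rw [hK, hc, ← Polynomial.C_pow, Polynomial.sum_def]
        apply Finset.sum_eq_zero
        intro j hj
        have hj0 : j = 0 := Finset.mem_singleton.mp (Polynomial.support_C_subset _ hj)
        simp [hj0]
      filter_upwards with t
      rw [hev t, hK0]
      positivity
  | sq h =>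
    filter_upwards with t
    rw [map_pow]
    positivity
  | add ha hb iha ihb =>
    filter_upwards [iha, ihb] with t h1 h2
    rw [map_add]; exact add_nonneg h1 h2
  | mul ha hb iha ihb =>
    filter_upwards [iha, ihb] with t h1 h2
    rw [map_mul]; exact mul_nonneg h1 h2

lemma eval_aeval_poly (f : ℕ → Polynomial ℝ) (t : ℝ) (q : TP) :
    Polynomial.eval t (MvPolynomial.aeval f q) =
      MvPolynomial.eval (fun j => Polynomial.eval t (f j)) q := by
  induction q using MvPolynomial.induction_on with
  | C a => simp
  | add p q hp hq => simp [hp, hq]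
  | mul_X p n hp => simp [hp]

/-- `T₂ − T₁²` is not a quotient of elements of `P₀`. -/
theorem stmt_14 :
    ¬ ∃ q₁ q₂ : TP, P0 q₁ ∧ P0 q₂ ∧ q₂ ≠ 0 ∧ q₂ * (Tv 2 - Tv 1 ^ 2) = q₁ := by
  rintro ⟨q₁, q₂, h₁, h₂, hne, heq⟩
  have hzero : ∀ c : ℕ → ℝ, 0 < c 1 → MvPolynomial.eval c q₂ = 0 := by
    intro c hc1
    set g : Polynomial ℝ :=
      MvPolynomial.aeval (fun j => if j = 0 then Polynomial.C (c 0)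
        else Polynomial.X ^ j + Polynomial.C (c j)) q₂ with hg
    have hgen : ∀ t : ℝ, Polynomial.eval t g = MvPolynomial.eval (ptv c t) q₂ := by
      intro t
      rw [hg, eval_aeval_poly]
      have hfun : (fun j => Polynomial.eval t (if j = 0 then Polynomial.C (c 0)
          else Polynomial.X ^ j + Polynomial.C (c j))) = ptv c t := by
        funext j
        by_cases h : j = 0 <;> simp [ptv, h]
      rw [hfun]
    have hfac : ∀ᶠ t in atTop, MvPolynomial.eval (ptv c t) (Tv 2 - Tv 1 ^ 2) < 0 := by
      rw [eventually_atTop]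
      refine ⟨(c 2 - c 1 ^ 2 + 1) / (2 * c 1), fun t ht => ?_⟩
      have h2c : (0:ℝ) < 2 * c 1 := by linarith
      rw [div_le_iff₀ h2c] at ht
      have hv : MvPolynomial.eval (ptv c t) (Tv 2 - Tv 1 ^ 2)
          = (t ^ 2 + c 2) - (t ^ 1 + c 1) ^ 2 := by
        simp [Tv, ptv]
      rw [hv]
      nlinarith
    have h0 : ∀ᶠ t in atTop, MvPolynomial.eval (ptv c t) q₂ = 0 := by
      filter_upwards [key c q₁ h₁, key c q₂ h₂, hfac] with t ha hb hd
      have he : MvPolynomial.eval (ptv c t) q₂ * MvPolynomial.eval (ptv c t) (Tv 2 - Tv 1 ^ 2)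
          = MvPolynomial.eval (ptv c t) q₁ := by rw [← map_mul, heq]
      have hle : MvPolynomial.eval (ptv c t) q₂ ≤ 0 := by nlinarith
      linarith
    have hg0 : g = 0 := by
      apply Polynomial.eq_zero_of_infinite_isRoot
      obtain ⟨N, hN⟩ := eventually_atTop.mp h0
      refine Set.Infinite.mono ?_ (Set.Ici_infinite N)
      intro t ht
      simp only [Set.mem_setOf_eq, Polynomial.IsRoot, hgen t]
      exact hN t ht
    have hfin := hgen 0
    rw [hg0, Polynomial.eval_zero] at hfin
    have hpt : ptv c 0 = c := by
      funext j
      by_cases h : j = 0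
      · simp [ptv, h]
      · simp [ptv, h, zero_pow h]
    rw [hpt] at hfin
    exact hfin.symm
  apply hne
  apply MvPolynomial.funext
  intro x
  rw [map_zero]
  have hpoly : ∀ s : ℝ, 0 < s → MvPolynomial.eval (Function.update x 1 s) q₂ = 0 := by
    intro s hs
    apply hzero
    simpa using hs
  set h : Polynomial ℝ :=
    MvPolynomial.aeval (fun j => if j = 1 then Polynomial.X else Polynomial.C (x j)) q₂ with hh
  have hhe : ∀ s : ℝ, Polynomial.eval s h = MvPolynomial.eval (Function.update x 1 s) q₂ := by
    intro s
    rw [hh, eval_aeval_poly]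
    have hfun : (fun j => Polynomial.eval s (if j = 1 then Polynomial.X
        else Polynomial.C (x j))) = Function.update x 1 s := by
      funext j
      by_cases hj : j = 1 <;> simp [Function.update, hj]
    rw [hfun]
  have hh0 : h = 0 := by
    apply Polynomial.eq_zero_of_infinite_isRoot
    refine Set.Infinite.mono ?_ (Set.Ioi_infinite (0:ℝ))
    intro s hs
    simp only [Set.mem_setOf_eq, Polynomial.IsRoot, hhe s]
    exact hpoly s hs
  have hx := hhe (x 1)
  rw [hh0, Polynomial.eval_zero, Function.update_eq_self] at hx
  exact hx.symm

end
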